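/- Let u₁ ∈ H₀ˢ(Ω₁) and u₂ ∈ H₀ˢ(Ω₂) be given with [u₁]ₛ, [u₂]ₛ < ∞ and ‖u₁‖_{L²} = ‖u₂‖_{L²} = 1. Define u_x(y) = u₁(y)u₂(y−x). Then for almost every x ∈ ℝᴺ, u_x ∈ H₀ˢ(Ω₁ ∩ (Ω₂ + x)); that is, u_x ∈ L²(ℝᴺ), [u_x]ₛ < ∞, and u_x = 0 a.e. outside Ω₁ ∩ (Ω₂ + x). -/

import Mathlib

open MeasureTheory Metric Bornology

noncomputable section

/-- Euclidean space ℝᴺ. -/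
abbrev E (N : ℕ) := EuclideanSpace ℝ (Fin N)

/-- Squared Gagliardo seminorm [u]ₛ² of order s. -/
def gag (N : ℕ) (s : ℝ) (u : E N → ℝ) : ℝ :=
  ∫ p : E N × E N, (u p.1 - u p.2) ^ 2 / ‖p.1 - p.2‖ ^ ((N : ℝ) + 2 * s)

/-- Finiteness of the Gagliardo seminorm: the kernel is integrable. -/
def GagFin (N : ℕ) (s : ℝ) (u : E N → ℝ) : Prop :=
  Integrable (fun p : E N × E N => (u p.1 - u p.2) ^ 2 / ‖p.1 - p.2‖ ^ ((N : ℝ) + 2 * s))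

/-- Membership in H₀ˢ(Ω): u ∈ L², finite Gagliardo seminorm, u = 0 a.e. outside Ω. -/
def InH0s (N : ℕ) (s : ℝ) (Ω : Set (E N)) (u : E N → ℝ) : Prop :=
  MemLp u 2 volume ∧ GagFin N s u ∧ ∀ᵐ y ∂(volume : Measure (E N)), y ∉ Ω → u y = 0

/-- First eigenvalue λ_Ω(α, D) of the fractional composite membrane problem. -/
def lam (N : ℕ) (s C α : ℝ) (Ω D : Set (E N)) : ℝ :=
  sInf {r : ℝ | ∃ u : E N → ℝ, InH0s N s Ω u ∧ 0 < (∫ y in Ω, (u y) ^ 2) ∧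
    r = (C / 2 * gag N s u + α * ∫ y in D, (u y) ^ 2) / ∫ y in Ω, (u y) ^ 2}

/-- Optimal value Λ_Ω(α, c) of the composite membrane optimization problem. -/
def Lam (N : ℕ) (s C α : ℝ) (Ω : Set (E N)) (c : ℝ) : ℝ :=
  sInf {r : ℝ | ∃ D : Set (E N), MeasurableSet D ∧ D ⊆ Ω ∧
    volume D = ENNReal.ofReal c ∧ r = lam N s C α Ω D}

/-- First Dirichlet eigenvalue of the fractional Laplacian on Ω. -/
def lam1 (N : ℕ) (s C : ℝ) (Ω : Set (E N)) : ℝ :=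
  sInf {r : ℝ | ∃ u : E N → ℝ, InH0s N s Ω u ∧ 0 < (∫ y in Ω, (u y) ^ 2) ∧
    r = (C / 2 * gag N s u) / ∫ y in Ω, (u y) ^ 2}

/-- Increasing Schwarz symmetrization of f relative to Ω. -/
def incRear (N : ℕ) (Ω : Set (E N)) (f : E N → ℝ) (x : E N) : ℝ :=
  sInf {t : ℝ | volume (ball (0 : E N) ‖x‖) < volume {y ∈ Ω | f y < t}}

/-- Decreasing Schwarz symmetrization of f (defined on all of ℝᴺ). -/
def decRear (N : ℕ) (f : E N → ℝ) (x : E N) : ℝ :=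
  sInf {t : ℝ | volume {y : E N | t < f y} < volume (ball (0 : E N) ‖x‖)}

/-- The function x ↦ |Ω₁ ∩ (Ω₂ + x)|. -/
def interVol (N : ℕ) (Ω₁ Ω₂ : Set (E N)) (x : E N) : ℝ :=
  (volume (Ω₁ ∩ ((fun z => z + x) '' Ω₂))).toReal

/-! With `u_x y = u₁ y * u₂ (y - x)`, Tonelli and translation invariance give
`∫ ‖u_x‖²_{L²} dx = ‖u₁‖² ‖u₂‖²`. For the Gagliardo energy, split
`u₁(y) u₂(y-x) - u₁(z) u₂(z-x) = u₁(y) (u₂(y-x) - u₂(z-x)) + u₂(z-x) (u₁(y) - u₁(z))`;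
integrating in `x` first, the first term contributes `‖u₁‖² [u₂]²` (the `x`-integral of
`(u₂(y-x) - u₂(z-x))²` depends only on `y - z`, and against the kernel it integrates to `[u₂]²`),
the second `[u₁]² ‖u₂‖²`.
So `∫ [u_x]² dx ≤ 2 (‖u₁‖² [u₂]² + [u₁]² ‖u₂‖²) < ∞`, and both quantities are finite for a.e. `x`. -/

open scoped ENNReal

section TranslationProduct

variable {G : Type*} [AddCommGroup G] [MeasurableSpace G] [MeasurableAdd₂ G] [MeasurableNeg G]
  {μ : Measure G} [SFinite μ] [μ.IsAddLeftInvariant] [μ.IsNegInvariant]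

def gagliardoEnergy (μ : Measure G) (k : G → ℝ≥0∞) (f : G → ℝ) : ℝ≥0∞ :=
  ∫⁻ p : G × G, ‖f p.1 - f p.2‖ₑ ^ 2 * k (p.1 - p.2) ∂μ.prod μ

omit [SFinite μ] in
lemma lintegral_lintegral_mul_comp_sub {φ ψ : G → ℝ≥0∞} (hφ : Measurable φ) (hψ : Measurable ψ) :
    ∫⁻ y, ∫⁻ z, φ y * ψ (y - z) ∂μ ∂μ = (∫⁻ y, φ y ∂μ) * ∫⁻ z, ψ z ∂μ := by
  have inner (y : G) : ∫⁻ z, φ y * ψ (y - z) ∂μ = φ y * ∫⁻ z, ψ z ∂μ := by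
    rw [lintegral_const_mul _ (by fun_prop), lintegral_sub_left_eq_self ψ y]
  simp_rw [inner]
  exact lintegral_mul_const _ hφ

lemma gagliardoEnergy_eq_lintegral_translate {k : G → ℝ≥0∞} {f : G → ℝ} (hk : Measurable k)
    (hf : Measurable f) :
    gagliardoEnergy μ k f = ∫⁻ h, k h * ∫⁻ w, ‖f w - f (w - h)‖ₑ ^ 2 ∂μ ∂μ := by
  rw [gagliardoEnergy, lintegral_prod _ (by fun_prop)]
  have hsub (w : G) : ∫⁻ z, ‖f w - f z‖ₑ ^ 2 * k (w - z) ∂μ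
      = ∫⁻ h, ‖f w - f (w - h)‖ₑ ^ 2 * k h ∂μ := by
    rw [← lintegral_sub_left_eq_self _ w]
    simp only [sub_sub_cancel]
  simp_rw [hsub]
  rw [lintegral_lintegral_swap (by fun_prop)]
  simp_rw [mul_comm _ (k _)]
  exact lintegral_congr fun h => lintegral_const_mul _ (by fun_prop)

lemma enorm_mul_sub_mul_sq_le (a b c d : ℝ) :
    ‖a * b - c * d‖ₑ ^ 2 ≤ 2 * (‖a‖ₑ ^ 2 * ‖b - d‖ₑ ^ 2 + ‖d‖ₑ ^ 2 * ‖a - c‖ₑ ^ 2) := by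
  have hsplit : a * b - c * d = a * (b - d) + d * (a - c) := by ring
  calc ‖a * b - c * d‖ₑ ^ 2 ≤ (‖a‖ₑ * ‖b - d‖ₑ + ‖d‖ₑ * ‖a - c‖ₑ) ^ 2 := by
        rw [hsplit, ← enorm_mul, ← enorm_mul]
        gcongr
        exact enorm_add_le _ _
    _ ≤ 2 * ((‖a‖ₑ * ‖b - d‖ₑ) ^ 2 + (‖d‖ₑ * ‖a - c‖ₑ) ^ 2) := by
        have := add_sq_le (a := ‖a‖₊ * ‖b - d‖₊) (b := ‖d‖₊ * ‖a - c‖₊)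
        simp only [enorm_eq_nnnorm]
        exact_mod_cast this
    _ = _ := by ring

variable {k : G → ℝ≥0∞} {f g : G → ℝ}

lemma lintegral_lintegral_mul_translate_enorm_sq (hf : Measurable f) (hg : Measurable g) :
    ∫⁻ x, ∫⁻ y, ‖f y * g (y - x)‖ₑ ^ 2 ∂μ ∂μ
      = (∫⁻ y, ‖f y‖ₑ ^ 2 ∂μ) * ∫⁻ z, ‖g z‖ₑ ^ 2 ∂μ := by
  simp_rw [enorm_mul, mul_pow]
  rw [lintegral_lintegral_swap (by fun_prop)]
  exact lintegral_lintegral_mul_comp_sub (φ := fun y => ‖f y‖ₑ ^ 2) (ψ := fun z => ‖g z‖ₑ ^ 2)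
    (by fun_prop) (by fun_prop)

lemma lintegral_lintegral_enorm_sq_mul_translate_sub (hk : Measurable k) (hf : Measurable f)
    (hg : Measurable g) :
    ∫⁻ x, ∫⁻ p : G × G, ‖f p.1‖ₑ ^ 2 * ‖g (p.1 - x) - g (p.2 - x)‖ₑ ^ 2 * k (p.1 - p.2)
        ∂μ.prod μ ∂μ
      = (∫⁻ y, ‖f y‖ₑ ^ 2 ∂μ) * gagliardoEnergy μ k g := by
  set T : G → ℝ≥0∞ := fun h => ∫⁻ w, ‖g w - g (w - h)‖ₑ ^ 2 ∂μ
  have hT : Measurable T := by fun_prop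
  have inner (p : G × G) :
      ∫⁻ x, ‖f p.1‖ₑ ^ 2 * ‖g (p.1 - x) - g (p.2 - x)‖ₑ ^ 2 * k (p.1 - p.2) ∂μ
        = ‖f p.1‖ₑ ^ 2 * (k (p.1 - p.2) * T (p.1 - p.2)) := by
    have hshift : ∫⁻ x, ‖g (p.1 - x) - g (p.2 - x)‖ₑ ^ 2 ∂μ = T (p.1 - p.2) := by
      rw [← lintegral_sub_left_eq_self _ p.1]
      refine lintegral_congr fun x => ?_
      rw [sub_sub_cancel, show p.2 - (p.1 - x) = x - (p.1 - p.2) by abel]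
    simp_rw [mul_right_comm _ _ (k _), mul_assoc]
    rw [lintegral_const_mul _ (by fun_prop), lintegral_const_mul _ (by fun_prop), hshift]
  rw [lintegral_lintegral_swap (by fun_prop)]
  simp_rw [inner]
  rw [lintegral_prod _ (by fun_prop), gagliardoEnergy_eq_lintegral_translate hk hg]
  exact lintegral_lintegral_mul_comp_sub (φ := fun y => ‖f y‖ₑ ^ 2) (ψ := fun h => k h * T h)
    (by fun_prop) (by fun_prop)

lemma lintegral_lintegral_translate_enorm_sq_mul_sub (hk : Measurable k) (hf : Measurable f)
    (hg : Measurable g) :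
    ∫⁻ x, ∫⁻ p : G × G, ‖g (p.2 - x)‖ₑ ^ 2 * ‖f p.1 - f p.2‖ₑ ^ 2 * k (p.1 - p.2) ∂μ.prod μ ∂μ
      = gagliardoEnergy μ k f * ∫⁻ z, ‖g z‖ₑ ^ 2 ∂μ := by
  have inner (p : G × G) :
      ∫⁻ x, ‖g (p.2 - x)‖ₑ ^ 2 * ‖f p.1 - f p.2‖ₑ ^ 2 * k (p.1 - p.2) ∂μ
        = (∫⁻ z, ‖g z‖ₑ ^ 2 ∂μ) * (‖f p.1 - f p.2‖ₑ ^ 2 * k (p.1 - p.2)) := by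
    simp_rw [mul_assoc]
    rw [lintegral_mul_const _ (by fun_prop), lintegral_sub_left_eq_self (fun z => ‖g z‖ₑ ^ 2) p.2]
  rw [lintegral_lintegral_swap (by fun_prop)]
  simp_rw [inner]
  rw [lintegral_const_mul _ (by fun_prop), mul_comm, gagliardoEnergy]

lemma lintegral_gagliardoEnergy_mul_translate_le (hk : Measurable k) (hf : Measurable f)
    (hg : Measurable g) :
    ∫⁻ x, gagliardoEnergy μ k (fun y => f y * g (y - x)) ∂μ
      ≤ 2 * ((∫⁻ y, ‖f y‖ₑ ^ 2 ∂μ) * gagliardoEnergy μ k g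
        + gagliardoEnergy μ k f * ∫⁻ z, ‖g z‖ₑ ^ 2 ∂μ) := by
  rw [← lintegral_lintegral_enorm_sq_mul_translate_sub hk hf hg, ← lintegral_lintegral_translate_enorm_sq_mul_sub hk hf hg,
    ← lintegral_add_left (by fun_prop), ← lintegral_const_mul _ (by fun_prop)]
  refine lintegral_mono fun x => ?_
  rw [← lintegral_add_left (by fun_prop), ← lintegral_const_mul _ (by fun_prop)]
  refine lintegral_mono fun p => ?_
  calc ‖f p.1 * g (p.1 - x) - f p.2 * g (p.2 - x)‖ₑ ^ 2 * k (p.1 - p.2)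
      ≤ 2 * (‖f p.1‖ₑ ^ 2 * ‖g (p.1 - x) - g (p.2 - x)‖ₑ ^ 2
          + ‖g (p.2 - x)‖ₑ ^ 2 * ‖f p.1 - f p.2‖ₑ ^ 2) * k (p.1 - p.2) := by
        gcongr
        exact enorm_mul_sub_mul_sq_le _ _ _ _
    _ = _ := by ring

lemma ae_lintegral_mul_translate_enorm_sq_lt_top (hf : Measurable f) (hg : Measurable g)
    (hf2 : ∫⁻ y, ‖f y‖ₑ ^ 2 ∂μ < ∞) (hg2 : ∫⁻ z, ‖g z‖ₑ ^ 2 ∂μ < ∞) :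
    ∀ᵐ x ∂μ, ∫⁻ y, ‖f y * g (y - x)‖ₑ ^ 2 ∂μ < ∞ := by
  refine ae_lt_top (by fun_prop) ?_
  rw [lintegral_lintegral_mul_translate_enorm_sq hf hg]
  exact ENNReal.mul_ne_top hf2.ne hg2.ne

lemma ae_gagliardoEnergy_mul_translate_lt_top (hk : Measurable k) (hf : Measurable f)
    (hg : Measurable g) (hf2 : ∫⁻ y, ‖f y‖ₑ ^ 2 ∂μ < ∞) (hg2 : ∫⁻ z, ‖g z‖ₑ ^ 2 ∂μ < ∞)
    (hEf : gagliardoEnergy μ k f < ∞) (hEg : gagliardoEnergy μ k g < ∞) :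
    ∀ᵐ x ∂μ, gagliardoEnergy μ k (fun y => f y * g (y - x)) < ∞ := by
  refine ae_lt_top (by unfold gagliardoEnergy; fun_prop) ?_
  refine ne_top_of_le_ne_top ?_ (lintegral_gagliardoEnergy_mul_translate_le hk hf hg)
  finiteness

end TranslationProduct

lemma memLp_two_iff_lintegral_enorm_sq_lt_top {α F : Type*} [MeasurableSpace α]
    [NormedAddCommGroup F] {μ : Measure α} {f : α → F} (hf : AEStronglyMeasurable f μ) :
    MemLp f 2 μ ↔ ∫⁻ a, ‖f a‖ₑ ^ 2 ∂μ < ∞ := by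
  rw [MemLp, and_iff_right hf,
    eLpNorm_lt_top_iff_lintegral_rpow_enorm_lt_top two_ne_zero ENNReal.ofNat_ne_top]
  simp

def gagKernel (N : ℕ) (s : ℝ) (h : E N) : ℝ≥0∞ := ‖(‖h‖ ^ ((N : ℝ) + 2 * s))⁻¹‖ₑ

lemma measurable_gagKernel (N : ℕ) (s : ℝ) : Measurable (gagKernel N s) := by
  unfold gagKernel
  fun_prop

variable {N : ℕ} {s : ℝ}

lemma gagFin_iff_gagliardoEnergy_lt_top {u : E N → ℝ} (hu : Measurable u) :
    GagFin N s u ↔ gagliardoEnergy volume (gagKernel N s) u < ∞ := by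
  have henorm (p : E N × E N) :
      ‖(u p.1 - u p.2) ^ 2 / ‖p.1 - p.2‖ ^ ((N : ℝ) + 2 * s)‖ₑ
        = ‖u p.1 - u p.2‖ₑ ^ 2 * gagKernel N s (p.1 - p.2) := by
    rw [div_eq_mul_inv, enorm_mul, enorm_pow, gagKernel]
  rw [GagFin, gagliardoEnergy, ← Measure.volume_eq_prod, Integrable, hasFiniteIntegral_iff_enorm]
  simp_rw [henorm]
  exact and_iff_right (by fun_prop : Measurable _).aestronglyMeasurable

lemma GagFin.congr_ae {u v : E N → ℝ} (h : GagFin N s u) (huv : u =ᵐ[volume] v) :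
    GagFin N s v := by
  refine h.congr ?_
  rw [Measure.volume_eq_prod]
  filter_upwards [Measure.quasiMeasurePreserving_fst.ae huv,
    Measure.quasiMeasurePreserving_snd.ae huv] with p h₁ h₂
  rw [h₁, h₂]

lemma InH0s.congr_ae {Ω : Set (E N)} {u v : E N → ℝ} (h : InH0s N s Ω u)
    (huv : u =ᵐ[volume] v) : InH0s N s Ω v := by
  refine ⟨h.1.ae_eq huv, h.2.1.congr_ae huv, ?_⟩
  filter_upwards [h.2.2, huv] with y hzero heq hy
  rw [← heq, hzero hy]

lemma InH0s.ae_mul_translate_of_measurable {Ω₁ Ω₂ : Set (E N)} {u₁ u₂ : E N → ℝ}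
    (hu₁ : Measurable u₁) (hu₂ : Measurable u₂) (h₁ : InH0s N s Ω₁ u₁) (h₂ : InH0s N s Ω₂ u₂) :
    ∀ᵐ x ∂(volume : Measure (E N)),
      InH0s N s (Ω₁ ∩ ((fun z => z + x) '' Ω₂)) (fun y => u₁ y * u₂ (y - x)) := by
  obtain ⟨hL₁, hG₁, hz₁⟩ := h₁
  obtain ⟨hL₂, hG₂, hz₂⟩ := h₂
  rw [memLp_two_iff_lintegral_enorm_sq_lt_top hu₁.aestronglyMeasurable] at hL₁
  rw [memLp_two_iff_lintegral_enorm_sq_lt_top hu₂.aestronglyMeasurable] at hL₂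
  rw [gagFin_iff_gagliardoEnergy_lt_top hu₁] at hG₁
  rw [gagFin_iff_gagliardoEnergy_lt_top hu₂] at hG₂
  filter_upwards [ae_lintegral_mul_translate_enorm_sq_lt_top hu₁ hu₂ hL₁ hL₂,
    ae_gagliardoEnergy_mul_translate_lt_top (measurable_gagKernel N s) hu₁ hu₂ hL₁ hL₂ hG₁ hG₂]
    with x hL hG
  refine ⟨(memLp_two_iff_lintegral_enorm_sq_lt_top (by fun_prop)).2 hL,
    (gagFin_iff_gagliardoEnergy_lt_top (by fun_prop)).2 hG, ?_⟩
  filter_upwards [hz₁, (measurePreserving_sub_right volume x).quasiMeasurePreserving.ae hz₂]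
    with y hy₁ hy₂ hy
  by_cases hyΩ₁ : y ∈ Ω₁
  · have hyΩ₂ : y - x ∉ Ω₂ := fun h => hy ⟨hyΩ₁, y - x, h, sub_add_cancel y x⟩
    rw [hy₂ hyΩ₂, mul_zero]
  · rw [hy₁ hyΩ₁, zero_mul]

theorem stmt16_general {N : ℕ} (s : ℝ)
    (Ω₁ Ω₂ : Set (E N)) (u₁ u₂ : E N → ℝ)
    (h₁ : InH0s N s Ω₁ u₁) (h₂ : InH0s N s Ω₂ u₂) :
    ∀ᵐ x ∂(volume : Measure (E N)),
      InH0s N s (Ω₁ ∩ ((fun z => z + x) '' Ω₂)) (fun y => u₁ y * u₂ (y - x)) := by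
  obtain ⟨v₁, hv₁, huv₁⟩ := h₁.1.aestronglyMeasurable.aemeasurable
  obtain ⟨v₂, hv₂, huv₂⟩ := h₂.1.aestronglyMeasurable.aemeasurable
  filter_upwards [(h₁.congr_ae huv₁).ae_mul_translate_of_measurable hv₁ hv₂ (h₂.congr_ae huv₂)]
    with x hx
  refine hx.congr_ae ?_
  filter_upwards [huv₁.symm, (measurePreserving_sub_right volume x).quasiMeasurePreserving.ae
    huv₂.symm] with y h₁ h₂
  rw [h₁, h₂]

theorem stmt16 {N : ℕ} (hN : 1 ≤ N) (s : ℝ) (hs : s ∈ Set.Ioo (0 : ℝ) 1)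
    (Ω₁ Ω₂ : Set (E N)) (u₁ u₂ : E N → ℝ)
    (h₁ : InH0s N s Ω₁ u₁) (h₂ : InH0s N s Ω₂ u₂)
    (hn₁ : (∫ y, (u₁ y) ^ 2) = 1) (hn₂ : (∫ y, (u₂ y) ^ 2) = 1) :
    ∀ᵐ x ∂(volume : Measure (E N)),
      InH0s N s (Ω₁ ∩ ((fun z => z + x) '' Ω₂)) (fun y => u₁ y * u₂ (y - x)) :=
  stmt16_general s Ω₁ Ω₂ u₁ u₂ h₁ h₂

end
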